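/- Let f : ℝⁿ → ℝ be convex and differentiable, and T : U → ℝⁿ a differentiable map on an open set U ⊆ ℝⁿ whose Jacobian DT(u) is invertible at every u ∈ U. Then f ∘ T is invex on U: there exists η : U × U → ℝⁿ such that (f∘T)(u₂) − (f∘T)(u₁) ≥ ⟨η(u₂,u₁), ∇(f∘T)(u₁)⟩ for all u₁, u₂ ∈ U. -/
import Mathlib

open RealInnerProductSpace

lemma convex_grad_ineq {E : Type*} [NormedAddCommGroup E] [NormedSpace ℝ E]
    (f : E → ℝ) (hf : ConvexOn ℝ Set.univ f) (hd : Differentiable ℝ f)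
    (x y : E) : fderiv ℝ f x (y - x) ≤ f y - f x := by
  set g : ℝ → ℝ := fun t => f (x + t • (y - x)) with hg
  have hgc : ConvexOn ℝ Set.univ g := by
    have := hf.comp_affineMap (AffineMap.lineMap x y : ℝ →ᵃ[ℝ] E)
    simp only [Set.preimage_univ] at this
    have heq : g = f ∘ (AffineMap.lineMap x y : ℝ →ᵃ[ℝ] E) := by
      funext t
      simp [g, AffineMap.lineMap_apply_module', add_comm]
    rw [heq]
    exact this
  have hline : HasDerivAt (fun t : ℝ => x + t • (y - x)) (y - x) (0 : ℝ) := by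
    simpa using ((hasDerivAt_id (0:ℝ)).smul_const (y - x)).const_add x
  have hgd : HasDerivAt g (fderiv ℝ f x (y - x)) 0 := by
    have : HasDerivAt g ((fderiv ℝ f (x + (0:ℝ) • (y - x))) (y - x)) 0 :=
      (hd (x + (0:ℝ) • (y - x))).hasFDerivAt.comp_hasDerivAt 0 hline
    simpa using this
  have := hgc.le_slope_of_hasDerivAt (Set.mem_univ (0:ℝ)) (Set.mem_univ (1:ℝ))
    one_pos hgd
  have hslope : slope g 0 1 = f y - f x := by simp [slope, g]
  rw [hslope] at this
  exact this

theorem stmt_2 {n : ℕ} (U : Set (EuclideanSpace ℝ (Fin n))) (hU : IsOpen U)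
    (f : EuclideanSpace ℝ (Fin n) → ℝ) (hf_conv : ConvexOn ℝ Set.univ f)
    (hf_diff : Differentiable ℝ f)
    (T : EuclideanSpace ℝ (Fin n) → EuclideanSpace ℝ (Fin n))
    (hT_diff : DifferentiableOn ℝ T U)
    (hT_jac : ∀ u ∈ U, ∃ e : EuclideanSpace ℝ (Fin n) ≃L[ℝ] EuclideanSpace ℝ (Fin n),
      (e : EuclideanSpace ℝ (Fin n) →L[ℝ] EuclideanSpace ℝ (Fin n)) = fderiv ℝ T u) :
    ∃ η : EuclideanSpace ℝ (Fin n) → EuclideanSpace ℝ (Fin n) → EuclideanSpace ℝ (Fin n),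
      ∀ u₁ ∈ U, ∀ u₂ ∈ U,
        f (T u₂) - f (T u₁) ≥ ⟪η u₂ u₁, gradient (fun u => f (T u)) u₁⟫ := by
  classical
  refine ⟨fun u₂ u₁ => if h : u₁ ∈ U then (hT_jac u₁ h).choose.symm (T u₂ - T u₁) else 0,
    fun u₁ h₁ u₂ h₂ => ?_⟩
  simp only [dif_pos h₁]
  set e := (hT_jac u₁ h₁).choose with hedef
  have he := (hT_jac u₁ h₁).choose_spec
  have hTat : DifferentiableAt ℝ T u₁ := hT_diff.differentiableAt (hU.mem_nhds h₁)
  have hcomp : fderiv ℝ (fun u => f (T u)) u₁ =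
      (fderiv ℝ f (T u₁)).comp (fderiv ℝ T u₁) :=
    fderiv_comp u₁ (hf_diff (T u₁)) hTat
  have hgrad : ⟪e.symm (T u₂ - T u₁), gradient (fun u => f (T u)) u₁⟫ =
      fderiv ℝ f (T u₁) (T u₂ - T u₁) := by
    rw [real_inner_comm, gradient, InnerProductSpace.toDual_symm_apply, hcomp]
    simp only [ContinuousLinearMap.comp_apply]
    congr 1
    rw [← he]
    exact e.apply_symm_apply _
  rw [hgrad]
  exact convex_grad_ineq f hf_conv hf_diff (T u₁) (T u₂)
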